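/- Let a, b, c be integers. If the circulant matrix M₁ with rows (a,c,b),(b,a,c),(c,b,a) is nonsingular, then the lattice graph 𝒢(M₁) is linearly symmetric; similarly, if the matrix M₁′ with rows (a,b,c),(a,c,−b−c),(a,−b−c,b) is nonsingular, then the lattice graph 𝒢(M₁′) is linearly symmetric. -/

import Mathlib

/-! The rotation of coordinates `e_i ↦ e_{i+1}` induces an automorphism of both lattice graphs:
its permutation matrix is circulant, hence commutes with the circulant `M₁`, and it maps the
columns of `M₁′` into their integer span. Powers of an inducing matrix are inducing, and the
powers of the rotation carry `e₁` to every `e_i`. -/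

open Matrix

/-- The subgroup (submodule) `Mℤⁿ` generated by the columns of `M`. -/
def colSpan {ι : Type*} [Fintype ι] [DecidableEq ι] (M : Matrix ι ι ℤ) :
    Submodule ℤ (ι → ℤ) :=
  LinearMap.range M.mulVecLin

/-- The vertex set `ℤⁿ/Mℤⁿ` of the lattice graph. -/
abbrev LatticeVertex {ι : Type*} [Fintype ι] [DecidableEq ι] (M : Matrix ι ι ℤ) :=
  (ι → ℤ) ⧸ colSpan M

/-- The `i`-th standard basis vector of `ℤⁿ`. -/
def stdBasis {ι : Type*} [DecidableEq ι] (i : ι) : ι → ℤ := Pi.single i 1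

/-- The lattice graph `𝒢(M)`. -/
def latticeGraph {ι : Type*} [Fintype ι] [DecidableEq ι] (M : Matrix ι ι ℤ) :
    SimpleGraph (LatticeVertex M) where
  Adj v w := v ≠ w ∧ ∃ i : ι,
      v - w = Submodule.Quotient.mk (stdBasis i) ∨
      w - v = Submodule.Quotient.mk (stdBasis i)
  symm := ⟨by rintro v w ⟨hne, i, h⟩; exact ⟨hne.symm, i, h.symm⟩⟩
  loopless := ⟨fun v h => h.1 rfl⟩

/-- The subgraph of `𝒢(M)` spanned by the directions in `S`. -/
def spannedSubgraph {ι : Type*} [Fintype ι] [DecidableEq ι] (M : Matrix ι ι ℤ) (S : Set ι) :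
    SimpleGraph (AddSubgroup.closure
      ((fun i => (Submodule.Quotient.mk (stdBasis i) : LatticeVertex M)) '' S)) where
  Adj v w := v ≠ w ∧ ∃ i ∈ S,
      (v : LatticeVertex M) - (w : LatticeVertex M) = Submodule.Quotient.mk (stdBasis i) ∨
      (w : LatticeVertex M) - (v : LatticeVertex M) = Submodule.Quotient.mk (stdBasis i)
  symm := ⟨by rintro v w ⟨hne, i, hiS, h⟩; exact ⟨hne.symm, i, hiS, h.symm⟩⟩
  loopless := ⟨fun v h => h.1 rfl⟩

/-- The projection of `𝒢(M)` over `e_j`: the subgraph spanned by all other directions. -/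
def projGraph {ι : Type*} [Fintype ι] [DecidableEq ι] (M : Matrix ι ι ℤ) (j : ι) :=
  spannedSubgraph M {i | i ≠ j}

/-- The torus graph `T(a₁,…,aₙ)`. -/
def torusGraph {n : ℕ} (a : Fin n → ℕ) : SimpleGraph (∀ i, ZMod (a i)) where
  Adj x y := x ≠ y ∧ ∃ i, (∀ j, j ≠ i → x j = y j) ∧ (x i = y i + 1 ∨ y i = x i + 1)
  symm := by
    constructor
    rintro x y ⟨hne, i, hj, h⟩
    exact ⟨hne.symm, i, fun j hji => (hj j hji).symm, h.symm⟩
  loopless := ⟨fun x h => h.1 rfl⟩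

/-- A signed permutation matrix: exactly one nonzero entry, equal to `±1`,
in each row and each column. -/
def IsSignedPerm {n : ℕ} (P : Matrix (Fin n) (Fin n) ℤ) : Prop :=
  (∀ i j, P i j = 0 ∨ P i j = 1 ∨ P i j = -1) ∧
  (∀ i, ∃! j, P i j ≠ 0) ∧ (∀ j, ∃! i, P i j ≠ 0)

/-- `𝒢(M)` is linearly symmetric: for every `i` there is a signed permutation matrix
inducing an automorphism of `𝒢(M)` sending `e₁` to `±e_i`. -/
def IsLinearlySymmetric {n : ℕ} (M : Matrix (Fin n) (Fin n) ℤ) : Prop :=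
  ∀ i : Fin n, ∃ P : Matrix (Fin n) (Fin n) ℤ, IsSignedPerm P ∧
    (∃ Q : Matrix (Fin n) (Fin n) ℤ, P * M = M * Q) ∧
    (P.mulVec (stdBasis (⟨0, i.pos⟩ : Fin n)) = stdBasis i ∨
      P.mulVec (stdBasis (⟨0, i.pos⟩ : Fin n)) = -stdBasis i)

open Equiv

lemma Equiv.Perm.permMatrix_apply {n R : Type*} [DecidableEq n] [Zero R] [One R]
    (σ : Perm n) (i j : n) : σ.permMatrix R i j = if σ i = j then 1 else 0 := by
  simp [PEquiv.toMatrix_apply]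

theorem isSignedPerm_permMatrix {n : ℕ} (σ : Perm (Fin n)) : IsSignedPerm (σ.permMatrix ℤ) := by
  simp only [IsSignedPerm, Perm.permMatrix_apply]
  refine ⟨fun i j => ?_, fun i => ⟨σ i, by simp, fun j => by simp [eq_comm]⟩,
    fun j => ⟨σ.symm j, by simp, fun i => by simp [Equiv.eq_symm_apply]⟩⟩
  split_ifs <;> simp

theorem permMatrix_mulVec_stdBasis {n : Type*} [Fintype n] [DecidableEq n] (σ : Perm n) (j : n) :
    σ.permMatrix ℤ *ᵥ stdBasis j = stdBasis (σ.symm j) := by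
  ext k
  simp [_root_.stdBasis, Pi.single_apply, Equiv.eq_symm_apply]

theorem pow_mul_eq_mul_pow_of_mul_eq_mul {R ι : Type*} [Fintype ι] [DecidableEq ι] [Semiring R]
    {P M Q : Matrix ι ι R} (h : P * M = M * Q) (k : ℕ) : P ^ k * M = M * Q ^ k := by
  induction k with
  | zero => simp
  | succ k ih =>
    rw [pow_succ', Matrix.mul_assoc, ih, ← Matrix.mul_assoc, h, Matrix.mul_assoc, ← pow_succ']

open Fin.NatCast in
theorem finRotate_pow_apply (m k : ℕ) (j : Fin (m + 1)) :
    (finRotate (m + 1) ^ k) j = j + (k : Fin (m + 1)) := by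
  induction k with
  | zero => simp
  | succ k ih => rw [pow_succ', Perm.mul_apply, ih, finRotate_apply, Nat.cast_succ, add_assoc]

theorem isLinearlySymmetric_of_permMatrix {n : ℕ} {M : Matrix (Fin n) (Fin n) ℤ}
    (h : ∀ i : Fin n, ∃ σ : Perm (Fin n), σ i = ⟨0, i.pos⟩ ∧ ∃ Q, σ.permMatrix ℤ * M = M * Q) :
    IsLinearlySymmetric M := by
  intro i
  obtain ⟨σ, hσ, hQ⟩ := h i
  refine ⟨σ.permMatrix ℤ, isSignedPerm_permMatrix σ, hQ, Or.inl ?_⟩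
  rw [permMatrix_mulVec_stdBasis, ← hσ, Equiv.symm_apply_apply]

theorem isLinearlySymmetric_of_finRotate {m : ℕ} {M Q : Matrix (Fin (m + 1)) (Fin (m + 1)) ℤ}
    (h : (finRotate (m + 1))⁻¹.permMatrix ℤ * M = M * Q) : IsLinearlySymmetric M := by
  refine isLinearlySymmetric_of_permMatrix fun i =>
    ⟨(finRotate (m + 1) ^ (i : ℕ))⁻¹, ?_, Q ^ (i : ℕ), ?_⟩
  · rw [Perm.inv_eq_iff_eq, finRotate_pow_apply]
    simp
  · rw [← Matrix.permMatrixHom_apply, map_pow, Matrix.permMatrixHom_apply]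
    exact pow_mul_eq_mul_pow_of_mul_eq_mul h _

theorem permMatrix_finRotate_inv_eq_circulant {m : ℕ} {R : Type*} [Zero R] [One R] :
    (finRotate (m + 1))⁻¹.permMatrix R = Matrix.circulant (Pi.single 1 1) := by
  ext i j
  simp [Pi.single_apply, sub_eq_iff_eq_add, add_comm]

theorem isLinearlySymmetric_circulant {m : ℕ} (v : Fin (m + 1) → ℤ) :
    IsLinearlySymmetric (Matrix.circulant v) :=
  isLinearlySymmetric_of_finRotate <| by
    rw [permMatrix_finRotate_inv_eq_circulant, Matrix.circulant_mul_comm]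

/-- The row rotation fixes the constant first column and sends the other two columns `u`, `w`
to `-u - w` and `u`. -/
theorem permMatrix_finRotate_inv_mul_eq_mul (a b c : ℤ) :
    (finRotate 3)⁻¹.permMatrix ℤ * !![a, b, c; a, c, -b - c; a, -b - c, b] =
      !![a, b, c; a, c, -b - c; a, -b - c, b] * !![1, 0, 0; 0, -1, 1; 0, -1, 0] := by
  ext i j
  fin_cases i <;> fin_cases j <;> simp [Matrix.mul_apply, Fin.sum_univ_three, ← sub_eq_add_neg]

/-- the lattice graphs of the two families of matrices are linearly symmetric
whenever the matrices are nonsingular. -/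
theorem latticeGraph_of_families_linearlySymmetric (a b c : ℤ) :
    ((!![a, c, b; b, a, c; c, b, a] : Matrix (Fin 3) (Fin 3) ℤ).det ≠ 0 →
      IsLinearlySymmetric !![a, c, b; b, a, c; c, b, a]) ∧
    ((!![a, b, c; a, c, -b - c; a, -b - c, b] : Matrix (Fin 3) (Fin 3) ℤ).det ≠ 0 →
      IsLinearlySymmetric !![a, b, c; a, c, -b - c; a, -b - c, b]) := by
  refine ⟨fun _ => ?_, fun _ => isLinearlySymmetric_of_finRotate
    (permMatrix_finRotate_inv_mul_eq_mul a b c)⟩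
  have hcirc : !![a, c, b; b, a, c; c, b, a] = Matrix.circulant ![a, b, c] := by
    ext i j
    fin_cases i <;> fin_cases j <;> rfl
  rw [hcirc]
  exact isLinearlySymmetric_circulant _
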